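/- Fix reals σ ≥ 0 and τ ≥ 0, and integers S ≥ 2, 1 ≤ p ≤ S−1. If u ∈ Ō_S and v ∈ Ō_p satisfy u(j) ≤ v(j) for all j ∈ {1,…,p}, then Φ^p(u)(j) ≤ Ψ^p(v)(j) for all j ∈ {1,…,p}. -/

import Mathlib

open MeasureTheory ProbabilityTheory Filter

noncomputable section

/-- Positive part `[x]⁺ = max(x,0)`. -/
def pos (x : ℝ) : ℝ := max x 0

/-- Nondecreasing rearrangement of a finite real vector. -/
def sortVec {n : ℕ} (u : Fin n → ℝ) : Fin n → ℝ := u ∘ Tuple.sort u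

/-- `u` belongs to `Ō_n`: nonnegative and nondecreasing coordinates. -/
def OSorted {n : ℕ} (u : Fin n → ℝ) : Prop := (∀ i, 0 ≤ u i) ∧ Monotone u

/-- Two-sided iterates `θ^n`, `n ∈ ℤ`, of a measurable bijection. -/
def iterZ {Ω : Type*} [MeasurableSpace Ω] (θ : Ω ≃ᵐ Ω) : ℤ → Ω → Ω
  | Int.ofNat n => (⇑θ)^[n]
  | Int.negSucc n => (⇑θ.symm)^[n + 1]

/-- The term `σ∘θ^{-k} − Σ_{i=1}^k τ∘θ^{-i}` (here `θinv = θ⁻¹`). -/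
def Zterm {Ω : Type*} (θinv : Ω → Ω) (σ τ : Ω → ℝ) (k : ℕ) (ω : Ω) : ℝ :=
  σ (θinv^[k] ω) - ∑ i ∈ Finset.Icc 1 k, τ (θinv^[i] ω)

/-- `Z_ℓ = [sup_{k ≥ ℓ} (σ∘θ^{-k} − Σ_{i=1}^k τ∘θ^{-i})]⁺`. -/
def Zfam {Ω : Type*} (θinv : Ω → Ω) (σ τ : Ω → ℝ) (ℓ : ℕ) (ω : Ω) : ℝ :=
  pos (⨆ k : {k : ℕ // ℓ ≤ k}, Zterm θinv σ τ (k : ℕ) ω)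

/-- GI/GI input: the doubly infinite sequences `(σ∘θ^n)` and `(τ∘θ^n)` are
jointly independent, and each is identically distributed. -/
def GIGI {Ω : Type*} [MeasurableSpace Ω] (μ : Measure Ω) (θ : Ω ≃ᵐ Ω) (σ τ : Ω → ℝ) : Prop :=
  iIndepFun (m := fun _ => inferInstance)
    (fun x : ℤ × Bool => fun ω => if x.2 then σ (iterZ θ x.1 ω) else τ (iterZ θ x.1 ω)) μ
  ∧ (∀ n : ℤ, IdentDistrib (fun ω => σ (iterZ θ n ω)) σ μ μ)
  ∧ (∀ n : ℤ, IdentDistrib (fun ω => τ (iterZ θ n ω)) τ μ μ)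

/-- The distribution of `τ` has unbounded support. -/
def UnboundedSupport {Ω : Type*} [MeasurableSpace Ω] (μ : Measure Ω) (τ : Ω → ℝ) : Prop :=
  ∀ M : ℝ, 0 < M → 0 < μ {ω | M < τ ω}

/-- The Kiefer–Wolfowitz map `G(u) = sorted [u + σe₁ − τ𝟙]⁺`. -/
def Gmap (S : ℕ) (σ τ : ℝ) (u : Fin S → ℝ) : Fin S → ℝ :=
  sortVec fun i => pos (u i + (if (i : ℕ) = 0 then σ else 0) - τ)

/-- The map `G^p` driving the J_{p+1}SW service profile. -/
def Gp (S p : ℕ) (hS : 0 < S) (σ τ : ℝ) (u : Fin S → ℝ) : Fin S → ℝ :=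
  if u ⟨0, hS⟩ = 0 then Gmap S σ τ u
  else sortVec fun i => pos (u i + (if (i : ℕ) = p then σ else 0) - τ)

/-- The map `Γ^p`. -/
def Gamma (p : ℕ) (σ τ : ℝ) (u : Fin p → ℝ) : Fin p → ℝ := fun j =>
  if h : (j : ℕ) + 1 < p then pos (u ⟨(j : ℕ) + 1, h⟩ - τ) else pos (max (u j) σ - τ)

/-- The map `Ψ^p`. -/
def Psi (p : ℕ) (σ τ : ℝ) (u : Fin p → ℝ) : Fin p → ℝ := fun j =>
  if h : (j : ℕ) + 1 < p then pos (min (max (u j) σ) (u ⟨(j : ℕ) + 1, h⟩) - τ)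
  else pos (max (u j) σ - τ)

/-- The map `Φ^p` on `Ō_S` (with `1 ≤ p < S`). -/
def Phi (S p : ℕ) (hp : p < S) (σ τ : ℝ) (u : Fin S → ℝ) : Fin S → ℝ := fun j =>
  let ind : ℝ := if 0 < u ⟨0, Nat.lt_of_le_of_lt (Nat.zero_le p) hp⟩ then u ⟨p, hp⟩ else 0
  if h : (j : ℕ) + 1 < S then
    if (j : ℕ) < p then pos (min (max (u j) σ) (u ⟨(j : ℕ) + 1, h⟩) - τ)
    else pos (min (max (u j) (σ + ind)) (u ⟨(j : ℕ) + 1, h⟩) - τ)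
  else pos (max (u j) (σ + ind) - τ)

/-- The loss-system map `H^p(u) = sorted [u + σ·1_{u(1)=0}e₁ − τ𝟙]⁺`. -/
def Hmap (p : ℕ) (hp : 0 < p) (σ τ : ℝ) (u : Fin p → ℝ) : Fin p → ℝ :=
  sortVec fun i => pos (u i + (if (i : ℕ) = 0 ∧ u ⟨0, hp⟩ = 0 then σ else 0) - τ)

end

/-! The first `p` coordinates of `Φ^p` and `Ψ^p` are both `[min (max x σ) y − τ]⁺`, which is
monotone in `x` and `y`, except the last coordinate of `Ψ^p`, which drops the `min` and so only
gets larger. -/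

theorem pos_le_pos {x y : ℝ} (h : x ≤ y) : pos x ≤ pos y :=
  max_le_max h le_rfl

theorem Phi_apply_of_lt {S p : ℕ} (hp : p < S) (σ τ : ℝ) (u : Fin S → ℝ) (j : Fin S)
    (hj : (j : ℕ) < p) :
    Phi S p hp σ τ u j = pos (min (max (u j) σ) (u ⟨(j : ℕ) + 1, by omega⟩) - τ) := by
  simp only [Phi, dif_pos (show (j : ℕ) + 1 < S by omega), if_pos hj]

theorem pos_min_max_sub_le_Psi {p : ℕ} (σ τ : ℝ) (v : Fin p → ℝ) (j : Fin p) {x y : ℝ}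
    (hx : x ≤ v j) (hy : ∀ h : (j : ℕ) + 1 < p, y ≤ v ⟨(j : ℕ) + 1, h⟩) :
    pos (min (max x σ) y - τ) ≤ Psi p σ τ v j := by
  unfold Psi
  split_ifs with h
  · exact pos_le_pos (sub_le_sub_right (min_le_min (max_le_max hx le_rfl) (hy h)) τ)
  · exact pos_le_pos (sub_le_sub_right ((min_le_left _ _).trans (max_le_max hx le_rfl)) τ)

theorem stmt9 (σ τ : ℝ)
    (S p : ℕ) (hS : 2 ≤ S) (hpS : p ≤ S - 1)
    (u : Fin S → ℝ) (v : Fin p → ℝ)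
    (huv : ∀ j : Fin p, u (Fin.castLE (by omega) j) ≤ v j) :
    ∀ j : Fin p, Phi S p (by omega) σ τ u (Fin.castLE (by omega) j) ≤ Psi p σ τ v j := by
  intro j
  rw [Phi_apply_of_lt _ σ τ u (Fin.castLE _ j) j.isLt]
  exact pos_min_max_sub_le_Psi σ τ v j (huv j) fun h => huv ⟨(j : ℕ) + 1, h⟩
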